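/- With the choice C_σ = α β_σ m̄_σ + β_{στ}(1-α) m̄_τ and C_τ = β_{στ} α m̄_σ + (1-α) β_τ m̄_τ, the derivative of the interpolating pressure satisfies, for all t, dA_N/dt + β_{στ} α(1-α) m̄_σ m̄_τ + (β_σ/2) α² m̄_σ² + (β_τ/2)(1-α)² m̄_τ² = β_{στ} α(1-α)⟨(m_σ - m̄_σ)(m_τ - m̄_τ)⟩_t + (β_σ α²/2)⟨(m_σ - m̄_σ)²⟩_t + (β_τ (1-α)²/2)⟨(m_τ - m̄_τ)²⟩_t. -/

import Mathlib

open Real Finset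

/-- A Boolean spin mapped to ±1. -/
noncomputable def spin (b : Bool) : ℝ := if b then 1 else -1

/-- Total spin of a configuration. -/
noncomputable def tot {n : ℕ} (σ : Fin n → Bool) : ℝ := ∑ i, spin (σ i)

/-- Magnetization of a configuration. -/
noncomputable def mag {n : ℕ} (σ : Fin n → Bool) : ℝ := tot σ / (n : ℝ)

/-- Minus the interpolating Hamiltonian: `-H_N(t)`. Note `Σ_{ij} σ_i τ_j = (Σσ)(Στ)`,
`Σ_{ij} σ_i σ_j = (Σσ)²`, etc. -/
noncomputable def Eint (Nσ Nτ : ℕ) (βσ βτ βστ Cσ Cτ t : ℝ)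
    (σ : Fin Nσ → Bool) (τ : Fin Nτ → Bool) : ℝ :=
  t * (βστ / ((Nσ : ℝ) + (Nτ : ℝ)) * (tot σ * tot τ)
      + βσ / (2 * ((Nσ : ℝ) + (Nτ : ℝ))) * (tot σ) ^ 2
      + βτ / (2 * ((Nσ : ℝ) + (Nτ : ℝ))) * (tot τ) ^ 2)
    + (1 - t) * (Cσ * tot σ + Cτ * tot τ)

/-- Interpolating partition function. -/
noncomputable def Zint (Nσ Nτ : ℕ) (βσ βτ βστ Cσ Cτ t : ℝ) : ℝ :=
  ∑ σ : Fin Nσ → Bool, ∑ τ : Fin Nτ → Bool, Real.exp (Eint Nσ Nτ βσ βτ βστ Cσ Cτ t σ τ)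

/-- Interpolating pressure `A_N(t) = (1/N) ln Z_N(t)`. -/
noncomputable def Aint (Nσ Nτ : ℕ) (βσ βτ βστ Cσ Cτ t : ℝ) : ℝ :=
  (1 / ((Nσ : ℝ) + (Nτ : ℝ))) * Real.log (Zint Nσ Nτ βσ βτ βστ Cσ Cτ t)

/-- Gibbs average `⟨O⟩_t` with the interpolating weight. -/
noncomputable def gibbs (Nσ Nτ : ℕ) (βσ βτ βστ Cσ Cτ t : ℝ)
    (O : (Fin Nσ → Bool) → (Fin Nτ → Bool) → ℝ) : ℝ :=
  (∑ σ : Fin Nσ → Bool, ∑ τ : Fin Nτ → Bool,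
      O σ τ * Real.exp (Eint Nσ Nτ βσ βτ βστ Cσ Cτ t σ τ)) / Zint Nσ Nτ βσ βτ βστ Cσ Cτ t

/-- With the optimal choice of external fields, the streaming equation rewrites in
terms of fluctuations of the magnetizations around the trial parameters `mbσ, mbτ`. -/
theorem ferro_streaming_fluctuations (Nσ Nτ : ℕ) (hσ : 1 ≤ Nσ) (hτ : 1 ≤ Nτ)
    (βσ βτ βστ α mbσ mbτ Cσ Cτ : ℝ)
    (hα : α = (Nσ : ℝ) / ((Nσ : ℝ) + (Nτ : ℝ)))
    (hCσ : Cσ = α * βσ * mbσ + βστ * (1 - α) * mbτ)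
    (hCτ : Cτ = βστ * α * mbσ + (1 - α) * βτ * mbτ) (t : ℝ) :
    deriv (Aint Nσ Nτ βσ βτ βστ Cσ Cτ) t
        + βστ * α * (1 - α) * mbσ * mbτ + (βσ / 2) * α ^ 2 * mbσ ^ 2
        + (βτ / 2) * (1 - α) ^ 2 * mbτ ^ 2
      = βστ * α * (1 - α) *
          gibbs Nσ Nτ βσ βτ βστ Cσ Cτ t (fun σ τ => (mag σ - mbσ) * (mag τ - mbτ))
        + βσ * α ^ 2 / 2 *
          gibbs Nσ Nτ βσ βτ βστ Cσ Cτ t (fun σ _ => (mag σ - mbσ) ^ 2)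
        + βτ * (1 - α) ^ 2 / 2 *
          gibbs Nσ Nτ βσ βτ βστ Cσ Cτ t (fun _ τ => (mag τ - mbτ) ^ 2)  := by
  have hNσ : ((Nσ : ℝ)) ≠ 0 := Nat.cast_ne_zero.mpr (by omega)
  have hNτ : ((Nτ : ℝ)) ≠ 0 := Nat.cast_ne_zero.mpr (by omega)
  have hNσpos : (0:ℝ) < (Nσ : ℝ) := Nat.cast_pos.mpr hσ
  have hNτpos : (0:ℝ) < (Nτ : ℝ) := Nat.cast_pos.mpr hτ
  have hN : ((Nσ : ℝ) + (Nτ : ℝ)) ≠ 0 := by positivity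
  set N : ℝ := (Nσ : ℝ) + (Nτ : ℝ) with hNdef
  -- the two pieces of the Hamiltonian
  set P : (Fin Nσ → Bool) → (Fin Nτ → Bool) → ℝ := fun σ τ =>
    βστ / N * (tot σ * tot τ) + βσ / (2 * N) * (tot σ) ^ 2
      + βτ / (2 * N) * (tot τ) ^ 2 with hPdef
  set Q : (Fin Nσ → Bool) → (Fin Nτ → Bool) → ℝ := fun σ τ =>
    Cσ * tot σ + Cτ * tot τ with hQdef
  -- positivity of Z
  have hZpos : 0 < Zint Nσ Nτ βσ βτ βστ Cσ Cτ t := by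
    unfold Zint
    refine Finset.sum_pos (fun σ _ => Finset.sum_pos (fun τ _ => Real.exp_pos _) ?_) ?_
    · exact Finset.univ_nonempty
    · exact Finset.univ_nonempty
  have hZne : Zint Nσ Nτ βσ βτ βστ Cσ Cτ t ≠ 0 := ne_of_gt hZpos
  -- derivative of each Boltzmann factor
  have hE : ∀ (σ : Fin Nσ → Bool) (τ : Fin Nτ → Bool),
      HasDerivAt (fun s => Real.exp (Eint Nσ Nτ βσ βτ βστ Cσ Cτ s σ τ))
        (Real.exp (Eint Nσ Nτ βσ βτ βστ Cσ Cτ t σ τ) * (P σ τ - Q σ τ)) t := by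
    intro σ τ
    have h1 : ∀ s : ℝ, Eint Nσ Nτ βσ βτ βστ Cσ Cτ s σ τ
        = Q σ τ + s * (P σ τ - Q σ τ) := by
      intro s
      simp only [Eint, hPdef, hQdef, hNdef]
      ring
    have h2 : HasDerivAt (fun s : ℝ => Q σ τ + s * (P σ τ - Q σ τ))
        (P σ τ - Q σ τ) t := by
      simpa using ((hasDerivAt_id t).mul_const (P σ τ - Q σ τ)).const_add (Q σ τ)
    have h3 : HasDerivAt (fun s => Eint Nσ Nτ βσ βτ βστ Cσ Cτ s σ τ)
        (P σ τ - Q σ τ) t := by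
      simpa only [← h1] using h2
    exact h3.exp
  -- derivative of Z
  have hZ : HasDerivAt (Zint Nσ Nτ βσ βτ βστ Cσ Cτ)
      (∑ σ : Fin Nσ → Bool, ∑ τ : Fin Nτ → Bool,
        Real.exp (Eint Nσ Nτ βσ βτ βστ Cσ Cτ t σ τ) * (P σ τ - Q σ τ)) t := by
    have := HasDerivAt.fun_sum (fun σ (_ : σ ∈ (Finset.univ : Finset (Fin Nσ → Bool))) =>
      HasDerivAt.fun_sum (fun τ (_ : τ ∈ (Finset.univ : Finset (Fin Nτ → Bool))) => hE σ τ))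
    exact this
  set S : ℝ := ∑ σ : Fin Nσ → Bool, ∑ τ : Fin Nτ → Bool,
      Real.exp (Eint Nσ Nτ βσ βτ βστ Cσ Cτ t σ τ) * (P σ τ - Q σ τ) with hSdef
  -- derivative of A
  have hA : HasDerivAt (Aint Nσ Nτ βσ βτ βστ Cσ Cτ)
      ((1 / N) * (S / Zint Nσ Nτ βσ βτ βστ Cσ Cτ t)) t := by
    have hlog : HasDerivAt (fun s => Real.log (Zint Nσ Nτ βσ βτ βστ Cσ Cτ s))
        (S / Zint Nσ Nτ βσ βτ βστ Cσ Cτ t) t := hZ.log hZne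
    have := hlog.const_mul (1 / N)
    exact this
  rw [hA.deriv]
  -- pointwise algebraic identity
  have hpt : ∀ x y : ℝ,
      (1 / N) * ((βστ / N * (x * y) + βσ / (2 * N) * x ^ 2 + βτ / (2 * N) * y ^ 2)
          - (Cσ * x + Cτ * y))
        + (βστ * α * (1 - α) * mbσ * mbτ + (βσ / 2) * α ^ 2 * mbσ ^ 2
          + (βτ / 2) * (1 - α) ^ 2 * mbτ ^ 2)
      = βστ * α * (1 - α) * ((x / (Nσ : ℝ) - mbσ) * (y / (Nτ : ℝ) - mbτ))
        + βσ * α ^ 2 / 2 * (x / (Nσ : ℝ) - mbσ) ^ 2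
        + βτ * (1 - α) ^ 2 / 2 * (y / (Nτ : ℝ) - mbτ) ^ 2 := by
    intro x y
    subst hCσ hCτ hα
    simp only [hNdef]
    field_simp
    ring
  -- abstract the observable sums appearing in the goal
  simp only [gibbs]
  set T1 : ℝ := ∑ σ : Fin Nσ → Bool, ∑ τ : Fin Nτ → Bool,
      (mag σ - mbσ) * (mag τ - mbτ) * Real.exp (Eint Nσ Nτ βσ βτ βστ Cσ Cτ t σ τ) with hT1
  set T2 : ℝ := ∑ σ : Fin Nσ → Bool, ∑ τ : Fin Nτ → Bool,
      (mag σ - mbσ) ^ 2 * Real.exp (Eint Nσ Nτ βσ βτ βστ Cσ Cτ t σ τ) with hT2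
  set T3 : ℝ := ∑ σ : Fin Nσ → Bool, ∑ τ : Fin Nτ → Bool,
      (mag τ - mbτ) ^ 2 * Real.exp (Eint Nσ Nτ βσ βτ βστ Cσ Cτ t σ τ) with hT3
  -- sum identity
  have hsum : (1 / N) * S
      + (βστ * α * (1 - α) * mbσ * mbτ + (βσ / 2) * α ^ 2 * mbσ ^ 2
        + (βτ / 2) * (1 - α) ^ 2 * mbτ ^ 2) * Zint Nσ Nτ βσ βτ βστ Cσ Cτ t
      = βστ * α * (1 - α) * T1 + βσ * α ^ 2 / 2 * T2 + βτ * (1 - α) ^ 2 / 2 * T3 := by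
    simp only [hT1, hT2, hT3, hSdef, Zint, Finset.mul_sum, ← Finset.sum_add_distrib]
    refine Finset.sum_congr rfl fun σ _ => ?_
    refine Finset.sum_congr rfl fun τ _ => ?_
    have h := hpt (tot σ) (tot τ)
    simp only [hPdef, hQdef, mag] at h ⊢
    linear_combination Real.exp (Eint Nσ Nτ βσ βτ βστ Cσ Cτ t σ τ) * h
  -- conclude
  refine mul_right_cancel₀ hZne ?_
  simp only [add_mul, mul_assoc, div_mul_cancel₀ _ hZne]
  linear_combination hsum
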